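/- Let F : ℝ_+ × ℝ_+^m → ℝ be such that for a.e. r, F(r, ·) is supermodular and for every i, every h ≥ 0 and a.e. R ≥ r ≥ 0, F(r, y + h e_i) + F(R, y) ≥ F(R, y + h e_i) + F(r, y). Let U = (u_1,…,u_m) with u_i : ℝ^N → ℝ_+ measurable, and suppose ∫ F(|x|, U(x)) dx and ∫ F(|x|, U^H(x)) dx are well-defined and finite for a closed half-space H containing the origin. Then ∫_{ℝ^N} F(|x|, U^H(x)) dx ≥ ∫_{ℝ^N} F(|x|, U(x)) dx. -/

import Mathlib

open MeasureTheory ENNReal NNReal Filter Topology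

/-- Reflection of `x` across the hyperplane `{x | ⟪x, e⟫ = t}`. -/
noncomputable def reflH {N : ℕ} (e : EuclideanSpace ℝ (Fin N)) (t : ℝ)
    (x : EuclideanSpace ℝ (Fin N)) : EuclideanSpace ℝ (Fin N) :=
  x - (2 * ((inner ℝ x e : ℝ) - t)) • e

/-- Polarization of `u` with respect to the closed half-space `{x | t ≤ ⟪x, e⟫}`. -/
noncomputable def polarize {N : ℕ} (e : EuclideanSpace ℝ (Fin N)) (t : ℝ)
    (u : EuclideanSpace ℝ (Fin N) → ℝ) (x : EuclideanSpace ℝ (Fin N)) : ℝ :=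
  if t ≤ (inner ℝ x e : ℝ) then max (u x) (u (reflH e t x)) else min (u x) (u (reflH e t x))

/-!
The reflection `σ` across `∂H` preserves Lebesgue measure, so `∫ f = ∫ f ∘ σ` and it suffices to
show `f x + f (σ x) ≤ g x + g (σ x)` pointwise, where `f` and `g` are the integrands before and
after polarization; by symmetry we may take `x ∈ H`. There polarization replaces the pair
`(U x, U (σ x))` by `(U x ⊔ U (σ x), U x ⊓ U (σ x))`, and `‖x‖ ≤ ‖σ x‖` because `0 ∈ H`.
Write `a = c + h`, `b = c + k` with `c = a ⊓ b`, so that `h` and `k` have disjoint supports.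
Adding the increments coordinate by coordinate, supermodularity gives
`F(r, c + h) + F(r, c + k) ≤ F(r, a ⊔ b) + F(r, c)`, and the monotone-difference condition gives
`F(R, c + k) - F(R, c) ≤ F(r, c + k) - F(r, c)`; summing yields the two-point inequality
`F(r, a) + F(R, b) ≤ F(r, a ⊔ b) + F(R, a ⊓ b)`.
-/

section Supermodular

variable {ι : Type*} [Fintype ι] [DecidableEq ι]

open Finset in
theorem le_add_of_le_add_single {G : (ι → ℝ) → ℝ} {S : Set ι}
    (hG : ∀ y, 0 ≤ y → ∀ j ∈ S, ∀ a, 0 ≤ a → G y ≤ G (y + Pi.single j a))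
    {y k : ι → ℝ} (hy : 0 ≤ y) (hk : 0 ≤ k) (hkS : ∀ j ∉ S, k j = 0) :
    G y ≤ G (y + k) := by
  suffices ∀ s : Finset ι, G y ≤ G (y + ∑ j ∈ s, Pi.single j (k j)) by
    simpa only [univ_sum_single] using this univ
  intro s
  induction s using Finset.cons_induction with
  | empty => simp
  | cons j s hj ih =>
    have hz : 0 ≤ y + ∑ i ∈ s, Pi.single i (k i) :=
      add_nonneg hy (sum_nonneg fun i _ => Pi.single_nonneg.2 (hk i))
    rw [sum_cons, add_left_comm, add_comm]
    by_cases hjS : j ∈ S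
    · exact ih.trans (hG _ hz j hjS _ (hk j))
    · simpa [hkS j hjS] using ih

def SupermodularOnNonneg (G : (ι → ℝ) → ℝ) : Prop :=
  ∀ y : ι → ℝ, 0 ≤ y → ∀ h k : ℝ, 0 ≤ h → 0 ≤ k → ∀ i j : ι, i ≠ j →
    G (y + Pi.single i h) + G (y + Pi.single j k) ≤ G (y + Pi.single i h + Pi.single j k) + G y

variable {G : (ι → ℝ) → ℝ}

theorem SupermodularOnNonneg.add_single_add (hG : SupermodularOnNonneg G) {y k : ι → ℝ}
    (hy : 0 ≤ y) (hk : 0 ≤ k) {i : ι} {a : ℝ} (ha : 0 ≤ a) (hki : k i = 0) :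
    G (y + Pi.single i a) + G (y + k) ≤ G (y + Pi.single i a + k) + G y := by
  have key := le_add_of_le_add_single (G := fun z => G (z + Pi.single i a) - G z) (S := {i}ᶜ)
    (fun z hz j hj b hb => by
      have := hG z hz a b ha hb i j (Ne.symm hj)
      simp only [add_right_comm z (Pi.single j b)]
      linarith)
    hy hk (fun j hj => by rwa [Set.notMem_compl_iff.1 hj])
  simp only [add_right_comm y k] at key
  linarith

theorem SupermodularOnNonneg.add_add (hG : SupermodularOnNonneg G) {y h k : ι → ℝ}
    (hy : 0 ≤ y) (hh : 0 ≤ h) (hk : 0 ≤ k) (hdisj : ∀ i, h i = 0 ∨ k i = 0) :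
    G (y + h) + G (y + k) ≤ G (y + h + k) + G y := by
  have key := le_add_of_le_add_single (G := fun z => G (z + k) - G z) (S := {i | k i = 0})
    (fun z hz j hj b hb => by
      have := hG.add_single_add hz hk hb hj
      linarith)
    hy hh (fun j hj => (hdisj j).resolve_right hj)
  linarith

/-- Here `f = F(r, ·)` and `g = F(R, ·)` with `r ≤ R`; `hfg` says that `f - g` is nondecreasing
along each coordinate. -/
theorem add_le_sup_add_inf {f g : (ι → ℝ) → ℝ} (hf : SupermodularOnNonneg f)
    (hfg : ∀ y : ι → ℝ, 0 ≤ y → ∀ h : ℝ, 0 ≤ h → ∀ i : ι,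
      g (y + Pi.single i h) + f y ≤ f (y + Pi.single i h) + g y)
    {a b : ι → ℝ} (ha : 0 ≤ a) (hb : 0 ≤ b) :
    f a + g b ≤ f (a ⊔ b) + g (a ⊓ b) := by
  set c := a ⊓ b
  have hc : 0 ≤ c := le_inf ha hb
  have hac : 0 ≤ a - c := sub_nonneg.2 inf_le_left
  have hbc : 0 ≤ b - c := sub_nonneg.2 inf_le_right
  have hdisj : ∀ i, (a - c) i = 0 ∨ (b - c) i = 0 := fun i => by
    rcases le_total (a i) (b i) with hab | hab <;> simp [c, hab]
  have hsuper := hf.add_add hc hac hbc hdisj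
  have hmono := le_add_of_le_add_single (G := fun z => f z - g z) (S := Set.univ)
    (fun z hz j _ h hh => by have := hfg z hz h hh j; linarith) hc hbc
    (fun j hj => absurd (Set.mem_univ j) hj)
  have hsup : c + (a - c) + (b - c) = a ⊔ b := by
    rw [eq_sub_of_add_eq' (inf_add_sup a b)]; abel
  rw [hsup] at hsuper
  simp only [add_sub_cancel] at hsuper hmono
  linarith

end Supermodular

theorem integral_le_integral_of_add_comp_le {α : Type*} [MeasurableSpace α] {μ : Measure α}
    {σ : α → α} (hσ : MeasurePreserving σ μ μ) {f g : α → ℝ} (hf : Integrable f μ)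
    (hg : Integrable g μ) (hfg : ∀ x, f x + f (σ x) ≤ g x + g (σ x)) :
    ∫ x, f x ∂μ ≤ ∫ x, g x ∂μ := by
  have hcomp (φ : α → ℝ) (hφ : Integrable φ μ) : ∫ x, (φ ∘ σ) x ∂μ = ∫ x, φ x ∂μ := by
    have hφσ : AEStronglyMeasurable φ (μ.map σ) := by rw [hσ.map_eq]; exact hφ.1
    rw [Function.comp_def, ← integral_map hσ.aemeasurable hφσ, hσ.map_eq]
  have hσf := hσ.integrable_comp_of_integrable hf
  have hσg := hσ.integrable_comp_of_integrable hg
  have := integral_mono (hf.add hσf) (hg.add hσg) hfg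
  rw [integral_add' hf hσf, integral_add' hg hσg, hcomp f hf, hcomp g hg] at this
  linarith

section Reflection

variable {N : ℕ} {e : EuclideanSpace ℝ (Fin N)}

theorem inner_reflH (he : ‖e‖ = 1) (t : ℝ) (x : EuclideanSpace ℝ (Fin N)) :
    inner ℝ (reflH e t x) e = 2 * t - inner ℝ x e := by
  rw [reflH, inner_sub_left, real_inner_smul_left, real_inner_self_eq_norm_sq, he]
  ring

theorem reflH_reflH (he : ‖e‖ = 1) (t : ℝ) (x : EuclideanSpace ℝ (Fin N)) :
    reflH e t (reflH e t x) = x := by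
  change reflH e t x - (2 * (inner ℝ (reflH e t x) e - t)) • e = x
  rw [inner_reflH he, reflH]
  module

theorem reflH_of_inner_eq {t : ℝ} {x : EuclideanSpace ℝ (Fin N)} (hx : inner ℝ x e = t) :
    reflH e t x = x := by
  simp [reflH, hx]

theorem norm_reflH_sq (he : ‖e‖ = 1) (t : ℝ) (x : EuclideanSpace ℝ (Fin N)) :
    ‖reflH e t x‖ ^ 2 = ‖x‖ ^ 2 - 4 * (inner ℝ x e - t) * t := by
  rw [reflH, norm_sub_sq_real, norm_smul, real_inner_smul_right, Real.norm_eq_abs, he, mul_one,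
    sq_abs]
  ring

theorem norm_le_norm_reflH (he : ‖e‖ = 1) {t : ℝ} (ht : t ≤ 0) {x : EuclideanSpace ℝ (Fin N)}
    (hx : t ≤ inner ℝ x e) : ‖x‖ ≤ ‖reflH e t x‖ := by
  have h := norm_reflH_sq he t x
  nlinarith [norm_nonneg x, norm_nonneg (reflH e t x)]

theorem reflH_eq_reflection (he : ‖e‖ = 1) (t : ℝ) :
    reflH e t = fun x => (ℝ ∙ e)ᗮ.reflection x + (2 * t) • e := by
  ext1 x
  rw [reflH, Submodule.reflection_orthogonal_apply, Submodule.reflection_singleton_apply, he,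
    real_inner_comm]
  module

theorem measurePreserving_reflH (he : ‖e‖ = 1) (t : ℝ) :
    MeasurePreserving (reflH e t) := by
  rw [reflH_eq_reflection he]
  exact (measurePreserving_add_right _ _).comp (LinearIsometryEquiv.measurePreserving _)

theorem polarize_of_le {t : ℝ} {x : EuclideanSpace ℝ (Fin N)} (hx : t ≤ inner ℝ x e)
    (u : EuclideanSpace ℝ (Fin N) → ℝ) :
    polarize e t u x = max (u x) (u (reflH e t x)) :=
  if_pos hx

theorem polarize_reflH_of_le (he : ‖e‖ = 1) {t : ℝ} {x : EuclideanSpace ℝ (Fin N)}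
    (hx : t ≤ inner ℝ x e) (u : EuclideanSpace ℝ (Fin N) → ℝ) :
    polarize e t u (reflH e t x) = min (u x) (u (reflH e t x)) := by
  rcases hx.lt_or_eq with hlt | heq
  · have : ¬ t ≤ inner ℝ (reflH e t x) e := by rw [inner_reflH he]; linarith
    rw [polarize, if_neg this, reflH_reflH he, min_comm]
  · have hfix := reflH_of_inner_eq heq.symm
    rw [hfix, polarize_of_le heq.le, hfix, max_self, min_self]

end Reflection

theorem add_comp_reflH_le_polarize {ι : Type*} [Fintype ι] [DecidableEq ι] {N : ℕ}
    (F : ℝ → (ι → ℝ) → ℝ) (hsuper : ∀ r : ℝ, 0 ≤ r → SupermodularOnNonneg (F r))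
    (hmonodiff : ∀ r R : ℝ, 0 ≤ r → r ≤ R → ∀ y : ι → ℝ, 0 ≤ y → ∀ h : ℝ, 0 ≤ h →
      ∀ i : ι, F R (y + Pi.single i h) + F r y ≤ F r (y + Pi.single i h) + F R y)
    {e : EuclideanSpace ℝ (Fin N)} (he : ‖e‖ = 1) {t : ℝ} (ht : t ≤ 0)
    {U : ι → EuclideanSpace ℝ (Fin N) → ℝ} (hU0 : ∀ i x, 0 ≤ U i x)
    (x : EuclideanSpace ℝ (Fin N)) :
    F ‖x‖ (fun i => U i x) + F ‖reflH e t x‖ (fun i => U i (reflH e t x)) ≤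
      F ‖x‖ (fun i => polarize e t (U i) x) +
        F ‖reflH e t x‖ (fun i => polarize e t (U i) (reflH e t x)) := by
  wlog hx : t ≤ inner ℝ x e generalizing x
  · have hσx : t ≤ inner ℝ (reflH e t x) e := by rw [inner_reflH he]; linarith
    have := this (reflH e t x) hσx
    rw [reflH_reflH he] at this
    linarith
  have hmax : (fun i => polarize e t (U i) x) =
      (fun i => U i x) ⊔ (fun i => U i (reflH e t x)) :=
    funext fun i => polarize_of_le hx (U i)
  have hmin : (fun i => polarize e t (U i) (reflH e t x)) =
      (fun i => U i x) ⊓ (fun i => U i (reflH e t x)) :=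
    funext fun i => polarize_reflH_of_le he hx (U i)
  rw [hmax, hmin]
  exact add_le_sup_add_inf (hsuper _ (norm_nonneg x))
    (hmonodiff _ _ (norm_nonneg x) (norm_le_norm_reflH he ht hx))
    (fun i => hU0 i x) (fun i => hU0 i _)

theorem stmt19_general (N m : ℕ) (F : ℝ → (Fin m → ℝ) → ℝ)
    (hsuper : ∀ r : ℝ, 0 ≤ r → ∀ y : Fin m → ℝ, 0 ≤ y → ∀ h k : ℝ, 0 ≤ h → 0 ≤ k →
      ∀ i j : Fin m, i ≠ j →
        F r (y + Pi.single i h) + F r (y + Pi.single j k) ≤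
          F r (y + Pi.single i h + Pi.single j k) + F r y)
    (hmonodiff : ∀ r R : ℝ, 0 ≤ r → r ≤ R → ∀ y : Fin m → ℝ, 0 ≤ y → ∀ h : ℝ, 0 ≤ h →
      ∀ i : Fin m, F R (y + Pi.single i h) + F r y ≤ F r (y + Pi.single i h) + F R y)
    (e : EuclideanSpace ℝ (Fin N)) (he : ‖e‖ = 1) (t : ℝ) (ht : t ≤ 0)
    (U : Fin m → EuclideanSpace ℝ (Fin N) → ℝ)
    (hU0 : ∀ i x, 0 ≤ U i x)
    (hint : Integrable (fun x => F ‖x‖ (fun i => U i x)) volume)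
    (hintH : Integrable (fun x => F ‖x‖ (fun i => polarize e t (U i) x)) volume) :
    ∫ x, F ‖x‖ (fun i => U i x) ≤ ∫ x, F ‖x‖ (fun i => polarize e t (U i) x) := by
  refine integral_le_integral_of_add_comp_le (measurePreserving_reflH he t) hint hintH fun x => ?_
  exact add_comp_reflH_le_polarize F hsuper hmonodiff he ht hU0 x

/-- Polarization with respect to a half-space containing the origin increases
`∫ F(|x|, U(x)) dx` for integrands `F` that are supermodular in the `y`-variables and
satisfy the monotone-difference condition in `(r, y)`. -/
theorem stmt19 (N m : ℕ) (F : ℝ → (Fin m → ℝ) → ℝ)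
    (hsuper : ∀ r : ℝ, 0 ≤ r → ∀ y : Fin m → ℝ, 0 ≤ y → ∀ h k : ℝ, 0 ≤ h → 0 ≤ k →
      ∀ i j : Fin m, i ≠ j →
        F r (y + Pi.single i h) + F r (y + Pi.single j k) ≤
          F r (y + Pi.single i h + Pi.single j k) + F r y)
    (hmonodiff : ∀ r R : ℝ, 0 ≤ r → r ≤ R → ∀ y : Fin m → ℝ, 0 ≤ y → ∀ h : ℝ, 0 ≤ h →
      ∀ i : Fin m, F R (y + Pi.single i h) + F r y ≤ F r (y + Pi.single i h) + F R y)
    (e : EuclideanSpace ℝ (Fin N)) (he : ‖e‖ = 1) (t : ℝ) (ht : t ≤ 0)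
    (U : Fin m → EuclideanSpace ℝ (Fin N) → ℝ)
    (hUm : ∀ i, Measurable (U i)) (hU0 : ∀ i x, 0 ≤ U i x)
    (hint : Integrable (fun x => F ‖x‖ (fun i => U i x)) volume)
    (hintH : Integrable (fun x => F ‖x‖ (fun i => polarize e t (U i) x)) volume) :
    ∫ x, F ‖x‖ (fun i => U i x) ≤ ∫ x, F ‖x‖ (fun i => polarize e t (U i) x) :=
  stmt19_general N m F hsuper hmonodiff e he t ht U hU0 hint hintH
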